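/- (Theorem T_map, part (b).) Suppose the tuple {(n0,n1,n2), B, B_I} is admissible. Then for every x̂ ∈ L2^{n_x}, the function 𝒯x̂ belongs to X (i.e., its three components have the required Sobolev regularity and satisfy the boundary condition defining X), and D(𝒯x̂) = x̂. -/

import Mathlib

open MeasureTheory Matrix Topology Filter

noncomputable section

namespace PIEpaper

/-- The Lebesgue measure restricted to the interval `[a,b]`. -/
def μab (a b : ℝ) : Measure ℝ := volume.restrict (Set.Icc a b)

/-- A matrix-valued function on `[a,b]` is essentially bounded (belongs to `L∞`). -/
def EssBddMat {ι κ : Type*} (a b : ℝ) (M : ℝ → Matrix ι κ ℝ) : Prop :=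
  Measurable (fun s i j => M s i j) ∧ ∃ C : ℝ, ∀ᵐ s ∂(μab a b), ∀ i j, |M s i j| ≤ C

/-- A matrix-valued function on `[a,b]` is (entrywise) square integrable. -/
def SqIntMat {ι κ : Type*} (a b : ℝ) (M : ℝ → Matrix ι κ ℝ) : Prop :=
  Measurable (fun s i j => M s i j) ∧ ∀ i j, MemLp (fun s => M s i j) 2 (μab a b)

/-- A matrix-valued kernel `R : [a,b]² → ℝ^{ι×κ}` is separable if `R(s,θ) = F(s)ᵀ G(θ)`
for essentially bounded `F, G`. -/
def SepMat {ι κ : Type*} (a b : ℝ) (R : ℝ → ℝ → Matrix ι κ ℝ) : Prop :=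
  ∃ (r : ℕ) (F : ℝ → Matrix (Fin r) ι ℝ) (G : ℝ → Matrix (Fin r) κ ℝ),
    EssBddMat a b F ∧ EssBddMat a b G ∧
    ∀ s ∈ Set.Icc a b, ∀ θ ∈ Set.Icc a b, R s θ = (F s)ᵀ * G θ

variable (a b : ℝ) (n0 n1 n2 : ℕ)

/-- Index type for the PDE state blocks `(x0, x1, x2)`, and likewise for the
fundamental state `Dx = (x0, ∂ₛx1, ∂ₛ²x2)`; it has `n_x = n0+n1+n2` elements. -/
abbrev Ix := Fin n0 ⊕ (Fin n1 ⊕ Fin n2)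

/-- Index type for the boundary core `x_c = (x1, x2, ∂ₛx2)`; it has `n_S = n1+2n2` elements. -/
abbrev Ic := Fin n1 ⊕ (Fin n2 ⊕ Fin n2)

/-- Index type for the first two block rows `(n1- and n2-sized)`. -/
abbrev I12 := Fin n1 ⊕ Fin n2

/-- Index type for the full derivative vector
`x_D = (x0, x1, x2, ∂ₛx1, ∂ₛx2, ∂ₛ²x2)` (with `n_x + n_S` elements), organized into the
fundamental-state block `(x0, ∂ₛx1, ∂ₛ²x2)` (left) and the core block `(x1, x2, ∂ₛx2)` (right). -/
abbrev ID := Ix n0 n1 n2 ⊕ Ic n1 n2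

/-- An element of `W^n = W_0^{n0} × W_1^{n1} × W_2^{n2}` on `[a,b]`, encoded through its
components together with their (weak) derivatives: `x1 ∈ W_1` and `x2 ∈ W_2` are identified
with their absolutely continuous representatives, i.e. they satisfy the fundamental theorem
of calculus with square-integrable derivatives `dx1 = ∂ₛx1`, `dx2 = ∂ₛx2`, `ddx2 = ∂ₛ²x2`. -/
structure State where
  x0 : ℝ → Fin n0 → ℝ
  x1 : ℝ → Fin n1 → ℝ
  dx1 : ℝ → Fin n1 → ℝ
  x2 : ℝ → Fin n2 → ℝ
  dx2 : ℝ → Fin n2 → ℝ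
  ddx2 : ℝ → Fin n2 → ℝ
  memLp_x0 : MemLp x0 2 (μab a b)
  memLp_dx1 : MemLp dx1 2 (μab a b)
  memLp_dx2 : MemLp dx2 2 (μab a b)
  memLp_ddx2 : MemLp ddx2 2 (μab a b)
  ftc_x1 : ∀ s ∈ Set.Icc a b, ∀ i, x1 s i = x1 a i + ∫ θ in a..s, dx1 θ i
  ftc_x2 : ∀ s ∈ Set.Icc a b, ∀ i, x2 s i = x2 a i + ∫ θ in a..s, dx2 θ i
  ftc_dx2 : ∀ s ∈ Set.Icc a b, ∀ i, dx2 s i = dx2 a i + ∫ θ in a..s, ddx2 θ i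

variable {a b n0 n1 n2}

/-- The PDE state `x = (x0, x1, x2)` as an `ℝ^{n_x}`-valued function. -/
def xfun (x : State a b n0 n1 n2) (s : ℝ) : Ix n0 n1 n2 → ℝ :=
  Sum.elim (x.x0 s) (Sum.elim (x.x1 s) (x.x2 s))

/-- The fundamental state `Dx = (x0, ∂ₛx1, ∂ₛ²x2)` as an `ℝ^{n_x}`-valued function. -/
def Dx (x : State a b n0 n1 n2) (s : ℝ) : Ix n0 n1 n2 → ℝ :=
  Sum.elim (x.x0 s) (Sum.elim (x.dx1 s) (x.ddx2 s))

/-- The boundary core `x_c = (x1, x2, ∂ₛx2)` as an `ℝ^{n_S}`-valued function. -/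
def xc (x : State a b n0 n1 n2) (s : ℝ) : Ic n1 n2 → ℝ :=
  Sum.elim (x.x1 s) (Sum.elim (x.x2 s) (x.dx2 s))

/-- The full derivative vector `x_D = (x0, x1, x2, ∂ₛx1, ∂ₛx2, ∂ₛ²x2)`. -/
def xD (x : State a b n0 n1 n2) (s : ℝ) : ID n0 n1 n2 → ℝ :=
  Sum.elim (Dx x s) (xc x s)

/-- The boundary-value vector `x_b = (x_c(a), x_c(b)) ∈ ℝ^{2 n_S}`. -/
def xb (x : State a b n0 n1 n2) : (Ic n1 n2 ⊕ Ic n1 n2) → ℝ :=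
  Sum.elim (xc x a) (xc x b)

variable (a b n0 n1 n2)

/-- `T(η) = [[I,0,0],[0,I,ηI],[0,0,I]] ∈ ℝ^{n_S × n_S}`. -/
def Tmat (η : ℝ) : Matrix (Ic n1 n2) (Ic n1 n2) ℝ :=
  Matrix.of fun i j =>
    match i, j with
    | .inl i, .inl j => if i = j then (1:ℝ) else 0
    | .inr (.inl i), .inr (.inl j) => if i = j then (1:ℝ) else 0
    | .inr (.inl i), .inr (.inr j) => if i = j then η else 0
    | .inr (.inr i), .inr (.inr j) => if i = j then (1:ℝ) else 0
    | _, _ => 0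

/-- `Q(η) = [[0,I_{n1},0],[0,0,ηI_{n2}],[0,0,I_{n2}]] ∈ ℝ^{n_S × n_x}`. -/
def Qmat (η : ℝ) : Matrix (Ic n1 n2) (Ix n0 n1 n2) ℝ :=
  Matrix.of fun i j =>
    match i, j with
    | .inl i, .inr (.inl j) => if i = j then (1:ℝ) else 0
    | .inr (.inl i), .inr (.inr j) => if i = j then η else 0
    | .inr (.inr i), .inr (.inr j) => if i = j then (1:ℝ) else 0
    | _, _ => 0

/-- Embedding of the first two block rows into the `x_c` index. -/
def emb12 : I12 n1 n2 → Ic n1 n2 := Sum.elim Sum.inl (fun k => Sum.inr (Sum.inl k))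

/-- `T1(η)`: the first two block rows of `T(η)`. -/
def T1mat (η : ℝ) : Matrix (I12 n1 n2) (Ic n1 n2) ℝ :=
  Matrix.of fun i j => Tmat n1 n2 η (emb12 n1 n2 i) j

/-- `Q1(η)`: the first two block rows of `Q(η)`. -/
def Q1mat (η : ℝ) : Matrix (I12 n1 n2) (Ix n0 n1 n2) ℝ :=
  Matrix.of fun i j => Qmat n0 n1 n2 η (emb12 n1 n2 i) j

/-- `U1 ∈ ℝ^{(n_x+n_S) × n_x}`: the 0-1 matrix placing `(v0,v1,v2)` into the
`x0`, `∂ₛx1` and `∂ₛ²x2` blocks of the `x_D` ordering. -/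
def U1 : Matrix (ID n0 n1 n2) (Ix n0 n1 n2) ℝ :=
  Matrix.of fun i j =>
    match i with
    | .inl i' => if i' = j then (1:ℝ) else 0
    | .inr _ => 0

/-- `U2 ∈ ℝ^{(n_x+n_S) × n_S}`: the 0-1 matrix placing `(w1,w2,w3)` into the
`x1`, `x2` and `∂ₛx2` blocks of the `x_D` ordering. -/
def U2 : Matrix (ID n0 n1 n2) (Ic n1 n2) ℝ :=
  Matrix.of fun i j =>
    match i with
    | .inl _ => (0:ℝ)
    | .inr i' => if i' = j then 1 else 0

/-- The stacked matrix `[T(0); T(b-a)] ∈ ℝ^{2n_S × n_S}`. -/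
def Tstack : Matrix (Ic n1 n2 ⊕ Ic n1 n2) (Ic n1 n2) ℝ :=
  Matrix.of fun i j =>
    match i with
    | .inl i' => Tmat n1 n2 0 i' j
    | .inr i' => Tmat n1 n2 (b - a) i' j

/-- The stacked matrix `[0_{n_S×n_x}; Q(η)] ∈ ℝ^{2n_S × n_x}`. -/
def Qstack (η : ℝ) : Matrix (Ic n1 n2 ⊕ Ic n1 n2) (Ix n0 n1 n2) ℝ :=
  Matrix.of fun i j =>
    match i with
    | .inl _ => (0:ℝ)
    | .inr i' => Qmat n0 n1 n2 η i' j

variable (B : Matrix (Ic n1 n2) (Ic n1 n2 ⊕ Ic n1 n2) ℝ)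
variable (B_I : ℝ → Matrix (Ic n1 n2) (ID n0 n1 n2) ℝ)

/-- `B_T = B [T(0); T(b−a)] − ∫_a^b B_I(s) U2 T(s−a) ds`. -/
def BT : Matrix (Ic n1 n2) (Ic n1 n2) ℝ :=
  B * Tstack a b n1 n2 -
    Matrix.of fun i j => ∫ s in a..b, (B_I s * U2 n0 n1 n2 * Tmat n1 n2 (s - a)) i j

/-- Admissibility of the boundary conditions: `B_T` is invertible. -/
def Admissible : Prop := IsUnit (BT a b n0 n1 n2 B B_I).det

/-- `B_Q(s) = B_T⁻¹ ( B_I(s) U1 − B [0; Q(b−s)] + ∫_s^b B_I(θ) U2 Q(θ−s) dθ )`. -/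
def BQ (s : ℝ) : Matrix (Ic n1 n2) (Ix n0 n1 n2) ℝ :=
  (BT a b n0 n1 n2 B B_I)⁻¹ *
    (B_I s * U1 n0 n1 n2 - B * Qstack n0 n1 n2 (b - s) +
      Matrix.of fun i j => ∫ θ in s..b, (B_I θ * U2 n0 n1 n2 * Qmat n0 n1 n2 (θ - s)) i j)

/-- The boundary condition `B x_b = ∫_a^b B_I(s) x_D(s) ds` defining the set `X`;
  together with the regularity encoded in `State` this says `x ∈ X`. -/
def BCholds (x : State a b n0 n1 n2) : Prop :=
  ∀ i, B.mulVec (xb x) i = ∫ s in a..b, (B_I s).mulVec (xD x s) i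

/-- `G0 = diag(I_{n0}, 0_{n1+n2})`. -/
def G0 : Matrix (Ix n0 n1 n2) (Ix n0 n1 n2) ℝ :=
  Matrix.of fun i j =>
    match i, j with
    | .inl i', .inl j' => if i' = j' then (1:ℝ) else 0
    | _, _ => 0

/-- `G2(s,θ) = [0_{n0×n_x}; T1(s−a) B_Q(θ)]`. -/
def G2 (s θ : ℝ) : Matrix (Ix n0 n1 n2) (Ix n0 n1 n2) ℝ :=
  Matrix.of fun i j =>
    match i with
    | .inl _ => (0:ℝ)
    | .inr i' => (T1mat n1 n2 (s - a) * BQ a b n0 n1 n2 B B_I θ) i' j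

/-- `G1(s,θ) = [0_{n0×n_x}; Q1(s−θ)] + G2(s,θ)`. -/
def G1 (s θ : ℝ) : Matrix (Ix n0 n1 n2) (Ix n0 n1 n2) ℝ :=
  (Matrix.of fun i j =>
    match i with
    | .inl _ => (0:ℝ)
    | .inr i' => Q1mat n0 n1 n2 (s - θ) i' j) + G2 a b n0 n1 n2 B B_I s θ

/-- The PI operator `𝒯`, acting on (representatives of) functions in `L2^{n_x}`:
`(𝒯v)(s) = G0 v(s) + ∫_a^s G1(s,θ) v(θ) dθ + ∫_s^b G2(s,θ) v(θ) dθ`. -/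
def Tfun (v : ℝ → Ix n0 n1 n2 → ℝ) (s : ℝ) : Ix n0 n1 n2 → ℝ := fun i =>
  (G0 n0 n1 n2).mulVec (v s) i
  + (∫ θ in a..s, (G1 a b n0 n1 n2 B B_I s θ).mulVec (v θ) i)
  + (∫ θ in s..b, (G2 a b n0 n1 n2 B B_I s θ).mulVec (v θ) i)

/-- `R_{D,2}(s,θ) = U2 T(s−a) B_Q(θ)`. -/
def RD2 (s θ : ℝ) : Matrix (ID n0 n1 n2) (Ix n0 n1 n2) ℝ :=
  U2 n0 n1 n2 * Tmat n1 n2 (s - a) * BQ a b n0 n1 n2 B B_I θ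

/-- `R_{D,1}(s,θ) = R_{D,2}(s,θ) + U2 Q(s−θ)`. -/
def RD1 (s θ : ℝ) : Matrix (ID n0 n1 n2) (Ix n0 n1 n2) ℝ :=
  RD2 a b n0 n1 n2 B B_I s θ + U2 n0 n1 n2 * Qmat n0 n1 n2 (s - θ)

end PIEpaper

namespace PIEpaper
variable (a b : ℝ) (n0 n1 n2 : ℕ)
variable (B : Matrix (Ic n1 n2) (Ic n1 n2 ⊕ Ic n1 n2) ℝ)
variable (B_I : ℝ → Matrix (Ic n1 n2) (ID n0 n1 n2) ℝ)

/-- The `L2[a,b]` norm of an `ℝ^ι`-valued function. -/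
def L2norm {ι : Type*} [Fintype ι] (f : ℝ → ι → ℝ) : ℝ :=
  Real.sqrt (∫ s in a..b, ∑ i, (f s i) ^ 2)

/-- The `L2[a,b]` inner product of two `ℝ^ι`-valued functions. -/
def L2inner {ι : Type*} [Fintype ι] (f g : ℝ → ι → ℝ) : ℝ :=
  ∫ s in a..b, ∑ i, f s i * g s i

variable (A0 : ℝ → Matrix (Ix n0 n1 n2) (ID n0 n1 n2) ℝ)
variable (A1 A2 : ℝ → ℝ → Matrix (Ix n0 n1 n2) (ID n0 n1 n2) ℝ)

/-- `Â0(s) = A0(s) U1`. -/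
def Ahat0 (s : ℝ) : Matrix (Ix n0 n1 n2) (Ix n0 n1 n2) ℝ := A0 s * U1 n0 n1 n2

/-- `Â1(s,θ)`. -/
def Ahat1 (s θ : ℝ) : Matrix (Ix n0 n1 n2) (Ix n0 n1 n2) ℝ :=
  A0 s * RD1 a b n0 n1 n2 B B_I s θ + A1 s θ * U1 n0 n1 n2
  + (Matrix.of fun i j => ∫ β in a..θ, (A1 s β * RD2 a b n0 n1 n2 B B_I β θ) i j)
  + (Matrix.of fun i j => ∫ β in θ..s, (A1 s β * RD1 a b n0 n1 n2 B B_I β θ) i j)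
  + (Matrix.of fun i j => ∫ β in s..b, (A2 s β * RD1 a b n0 n1 n2 B B_I β θ) i j)

/-- `Â2(s,θ)`. -/
def Ahat2 (s θ : ℝ) : Matrix (Ix n0 n1 n2) (Ix n0 n1 n2) ℝ :=
  A0 s * RD2 a b n0 n1 n2 B B_I s θ + A2 s θ * U1 n0 n1 n2
  + (Matrix.of fun i j => ∫ β in a..s, (A1 s β * RD2 a b n0 n1 n2 B B_I β θ) i j)
  + (Matrix.of fun i j => ∫ β in s..θ, (A2 s β * RD2 a b n0 n1 n2 B B_I β θ) i j)
  + (Matrix.of fun i j => ∫ β in θ..b, (A2 s β * RD1 a b n0 n1 n2 B B_I β θ) i j)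

/-- The PI operator `𝒜`:
`(𝒜v)(s) = Â0(s) v(s) + ∫_a^s Â1(s,θ) v(θ) dθ + ∫_s^b Â2(s,θ) v(θ) dθ`. -/
def Afun (v : ℝ → Ix n0 n1 n2 → ℝ) (s : ℝ) : Ix n0 n1 n2 → ℝ := fun i =>
  (Ahat0 n0 n1 n2 A0 s).mulVec (v s) i
  + (∫ θ in a..s, (Ahat1 a b n0 n1 n2 B B_I A0 A1 A2 s θ).mulVec (v θ) i)
  + (∫ θ in s..b, (Ahat2 a b n0 n1 n2 B B_I A0 A1 A2 s θ).mulVec (v θ) i)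

/-- The right-hand side of the PDE dynamics:
`A0(s) x_D(s) + ∫_a^s A1(s,θ) x_D(θ) dθ + ∫_s^b A2(s,θ) x_D(θ) dθ`. -/
def PDErhs (x : State a b n0 n1 n2) (s : ℝ) : Ix n0 n1 n2 → ℝ := fun i =>
  (A0 s).mulVec (xD x s) i
  + (∫ θ in a..s, (A1 s θ).mulVec (xD x θ) i)
  + (∫ θ in s..b, (A2 s θ).mulVec (xD x θ) i)

/-- `t ↦ u(t)` is Fréchet differentiable at `t` with respect to the `L2[a,b]` norm,
with derivative `g`. -/
def HasL2DerivAt (u : ℝ → ℝ → Ix n0 n1 n2 → ℝ) (g : ℝ → Ix n0 n1 n2 → ℝ) (t : ℝ) : Prop :=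
  Tendsto (fun h : ℝ =>
      L2norm a b (fun s i => (u (t + h) s i - u t s i) / h - g s i))
    (nhdsWithin 0 {0}ᶜ) (nhds 0)

/-- `t ↦ u(t)` is Fréchet differentiable at `t` with respect to the `𝒯`-norm
`v ↦ ‖𝒯v‖_{L2}`, with derivative `g`. -/
def HasTDerivAt (u : ℝ → ℝ → Ix n0 n1 n2 → ℝ) (g : ℝ → Ix n0 n1 n2 → ℝ) (t : ℝ) : Prop :=
  Tendsto (fun h : ℝ =>
      L2norm a b (Tfun a b n0 n1 n2 B B_I
        (fun s i => (u (t + h) s i - u t s i) / h - g s i)))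
    (nhdsWithin 0 {0}ᶜ) (nhds 0)

/-- `x : [0,∞) → W^n` satisfies the PDE defined by `{(n0,n1,n2), B, B_I, A0, A1, A2}` with
initial condition `x⁰ ∈ X`: `x(t) ∈ X` for all `t ≥ 0`, `x(0) = x⁰`, and for almost every
`t ≥ 0`, `x` is Fréchet differentiable (w.r.t. the `L2` norm) at `t` with derivative `ẋ(t)`
satisfying the dynamics for almost every `s ∈ [a,b]`. -/
def SatisfiesPDE (x : ℝ → State a b n0 n1 n2) (x0 : State a b n0 n1 n2) : Prop :=
  (∀ t, 0 ≤ t → BCholds a b n0 n1 n2 B B_I (x t)) ∧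
  (∀ᵐ s ∂(μab a b), ∀ i, xfun (x 0) s i = xfun x0 s i) ∧
  (∀ᵐ t ∂(volume.restrict (Set.Ici (0:ℝ))), ∃ g : ℝ → Ix n0 n1 n2 → ℝ,
    HasL2DerivAt a b n0 n1 n2 (fun τ => xfun (x τ)) g t ∧
    ∀ᵐ s ∂(μab a b), ∀ i, g s i = PDErhs a b n0 n1 n2 A0 A1 A2 (x t) s i)

/-- `x_f : [0,∞) → L2^{n_x}` satisfies the PIE defined by `{𝒯, 𝒜}` with initial condition
`x_f⁰ ∈ L2^{n_x}`: `x_f(t) ∈ L2` for all `t ≥ 0`, `x_f(0) = x_f⁰`, and for almost every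
`t ≥ 0`, `x_f` is Fréchet differentiable w.r.t. the `𝒯`-norm at `t` with derivative
`ẋ_f(t)` satisfying `𝒯 ẋ_f(t) = 𝒜 x_f(t)` for almost every `s ∈ [a,b]`. -/
def SatisfiesPIE (xf : ℝ → ℝ → Ix n0 n1 n2 → ℝ) (xf0 : ℝ → Ix n0 n1 n2 → ℝ) : Prop :=
  (∀ t, 0 ≤ t → MemLp (xf t) 2 (μab a b)) ∧
  (∀ᵐ s ∂(μab a b), ∀ i, xf 0 s i = xf0 s i) ∧
  (∀ᵐ t ∂(volume.restrict (Set.Ici (0:ℝ))), ∃ g : ℝ → Ix n0 n1 n2 → ℝ,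
    HasTDerivAt a b n0 n1 n2 B B_I xf g t ∧
    ∀ᵐ s ∂(μab a b), ∀ i,
      Tfun a b n0 n1 n2 B B_I g s i = Afun a b n0 n1 n2 B B_I A0 A1 A2 (xf t) s i)

/-- The `X`-norm `‖x‖_X = (Σ_{i=0}^2 ‖∂ₛ^i x_i‖²_{L2})^{1/2}`. -/
def normX (x : State a b n0 n1 n2) : ℝ :=
  Real.sqrt ((L2norm a b x.x0) ^ 2 + (L2norm a b x.dx1) ^ 2 + (L2norm a b x.ddx2) ^ 2)

/-- The Sobolev-type norm `‖x‖_H = Σ_{i=0}^2 Σ_{j=0}^i ‖∂ₛ^j x_i‖_{L2}`. -/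
def normH (x : State a b n0 n1 n2) : ℝ :=
  L2norm a b x.x0 + (L2norm a b x.x1 + L2norm a b x.dx1)
    + (L2norm a b x.x2 + L2norm a b x.dx2 + L2norm a b x.ddx2)

/-- The PDE defined by `{(n0,n1,n2), B, B_I, A0, A1, A2}` is exponentially stable. -/
def ExpStablePDE : Prop :=
  ∃ M > (0:ℝ), ∃ α > (0:ℝ), ∀ x0 : State a b n0 n1 n2, BCholds a b n0 n1 n2 B B_I x0 →
    ∀ x : ℝ → State a b n0 n1 n2, SatisfiesPDE a b n0 n1 n2 B B_I A0 A1 A2 x x0 →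
      ∀ t, 0 ≤ t → normH a b n0 n1 n2 (x t) ≤ M * normH a b n0 n1 n2 x0 * Real.exp (-α * t)

/-- The PIE defined by `{𝒯, 𝒜}` is exponentially stable. -/
def ExpStablePIE : Prop :=
  ∃ M > (0:ℝ), ∃ α > (0:ℝ), ∀ xf0 : ℝ → Ix n0 n1 n2 → ℝ, MemLp xf0 2 (μab a b) →
    ∀ xf : ℝ → ℝ → Ix n0 n1 n2 → ℝ,
      SatisfiesPIE a b n0 n1 n2 B B_I A0 A1 A2 xf xf0 →
      ∀ t, 0 ≤ t → L2norm a b (xf t) ≤ M * L2norm a b xf0 * Real.exp (-α * t)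

/-- The `X`-inner product `⟨u,w⟩_X = Σ_{i=0}^2 ⟨∂ₛ^i u_i, ∂ₛ^i w_i⟩_{L2}` of two
`ℝ^{n_x}`-valued functions, where the spatial derivatives of the `W_1`- and `W_2`-blocks
are taken classically (they exist a.e. for elements of `X`). -/
def XinnerF (u w : ℝ → Ix n0 n1 n2 → ℝ) : ℝ :=
  (∫ s in a..b, ∑ i : Fin n0, u s (Sum.inl i) * w s (Sum.inl i))
  + (∫ s in a..b, ∑ i : Fin n1,
      deriv (fun t => u t (Sum.inr (Sum.inl i))) s *
      deriv (fun t => w t (Sum.inr (Sum.inl i))) s)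
  + (∫ s in a..b, ∑ i : Fin n2,
      deriv (deriv (fun t => u t (Sum.inr (Sum.inr i)))) s *
      deriv (deriv (fun t => w t (Sum.inr (Sum.inr i)))) s)

/-- The `X`-distance between two elements of `X`, induced by the `X`-norm:
`‖u − v‖_X = ‖Du − Dv‖_{L2}`. -/
def distX (u v : State a b n0 n1 n2) : ℝ :=
  Real.sqrt (∫ s in a..b, ∑ i, (Dx u s i - Dx v s i) ^ 2)

end PIEpaper

/-!
For `x̂ ∈ L2`, put `w = ∫_a^b B_Q(θ) x̂(θ) dθ` and integrate `x̂` (once for `x1` and `∂ₛx2`,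
twice for `x2`) to get the state `y` with `Dy = x̂` and `x_c(a) = w`. Cauchy's formula for
repeated integrals gives `x_c(s) = T(s-a) w + ∫_a^s Q(s-θ) x̂(θ) dθ`; its first two block rows
are `𝒯x̂`, because `∫_a^s + ∫_s^b` of `T1(s-a) B_Q(θ) x̂(θ)` recombines into `T1(s-a) w`.
Substituting the same formula into the boundary condition and exchanging the order of
integration over the triangle `a ≤ θ ≤ s ≤ b` reduces it to `B_T w = ∫_a^b M(θ) x̂(θ) dθ`,
where `M(θ) = B_T B_Q(θ)` is the bracket in the definition of `B_Q`. All integrals exist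
since `x̂` and `B_I` are square integrable and every other factor is continuous on `[a, b]`.
-/

namespace PIEpaper

open Set

instance (a b : ℝ) : IsFiniteMeasure (μab a b) := by
  unfold μab
  infer_instance

section Interval

variable {a b : ℝ}

theorem ae_mem_μab : ∀ᵐ s ∂μab a b, s ∈ Icc a b :=
  ae_restrict_mem measurableSet_Icc

theorem memLp_μab_of_continuousOn {E : Type*} [NormedAddCommGroup E] {g : ℝ → E}
    (hg : ContinuousOn g (Icc a b)) (p : ENNReal) : MemLp g p (μab a b) := by
  obtain ⟨C, hC⟩ := isCompact_Icc.exists_bound_of_continuousOn hg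
  exact (memLp_top_of_bound (hg.aestronglyMeasurable measurableSet_Icc) C
    (ae_mem_μab.mono hC)).mono_exponent le_top

theorem intervalIntegrable_of_integrable_μab {g : ℝ → ℝ} (hg : Integrable g (μab a b)) {c d : ℝ}
    (hc : c ∈ Icc a b) (hd : d ∈ Icc a b) : IntervalIntegrable g volume c d :=
  (IntegrableOn.mono_set (t := Icc a b) hg (uIcc_subset_Icc hc hd)).intervalIntegrable

theorem intervalIntegral_eq_integral_μab (hab : a ≤ b) (g : ℝ → ℝ) :
    ∫ s in a..b, g s = ∫ s, g s ∂μab a b := by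
  rw [intervalIntegral.integral_of_le hab, μab, integral_Icc_eq_integral_Ioc]

theorem continuousOn_primitive_μab {f : ℝ → ℝ} (hf : Integrable f (μab a b)) :
    ContinuousOn (fun s => ∫ θ in a..s, f θ) (Icc a b) :=
  (intervalIntegral.continuousOn_primitive hf).congr fun _ hs =>
    intervalIntegral.integral_of_le hs.1

theorem integrable_mul_prod_mul {u v : ℝ → ℝ} {p : ℝ → ℝ → ℝ} (hu : Integrable u (μab a b))
    (hv : Integrable v (μab a b)) (hp : Continuous (Function.uncurry p)) :
    Integrable (fun z : ℝ × ℝ => u z.1 * p z.1 z.2 * v z.2) ((μab a b).prod (μab a b)) := by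
  obtain ⟨C, hC⟩ := (isCompact_Icc.prod isCompact_Icc).exists_bound_of_continuousOn hp.continuousOn
  have hbound : ∀ᵐ z ∂(μab a b).prod (μab a b), ‖p z.1 z.2‖ ≤ C := by
    rw [μab, Measure.prod_restrict]
    exact (ae_restrict_mem (measurableSet_Icc.prod measurableSet_Icc)).mono fun z hz => hC z hz
  refine ((hu.mul_prod hv).bdd_mul hp.aestronglyMeasurable hbound).congr ?_
  filter_upwards with z
  simp only [Function.uncurry]
  ring

end Interval

section Triangle

variable {a b : ℝ} {g : ℝ → ℝ → ℝ}

theorem intervalIntegral_eq_integral_indicator_fst {s : ℝ} (hs : s ∈ Icc a b) :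
    ∫ θ in a..s, g s θ =
      ∫ θ, {z : ℝ × ℝ | z.2 ≤ z.1}.indicator (Function.uncurry g) (s, θ) ∂μab a b := by
  have hfiber : (fun θ => {z : ℝ × ℝ | z.2 ≤ z.1}.indicator (Function.uncurry g) (s, θ)) =
      (Iic s).indicator (g s) := by
    ext θ
    by_cases h : θ ≤ s <;> simp [indicator, h]
  rw [hfiber, integral_indicator measurableSet_Iic, μab,
    Measure.restrict_restrict measurableSet_Iic,
    show Iic s ∩ Icc a b = Icc a s from ext fun x => by
      simp only [mem_inter_iff, mem_Iic, mem_Icc]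
      exact ⟨fun h => ⟨h.2.1, h.1⟩, fun h => ⟨h.2, h.1, h.2.trans hs.2⟩⟩,
    intervalIntegral.integral_of_le hs.1, integral_Icc_eq_integral_Ioc]

theorem intervalIntegral_eq_integral_indicator_snd {θ : ℝ} (hθ : θ ∈ Icc a b) :
    ∫ s in θ..b, g s θ =
      ∫ s, {z : ℝ × ℝ | z.2 ≤ z.1}.indicator (Function.uncurry g) (s, θ) ∂μab a b := by
  have hfiber : (fun s => {z : ℝ × ℝ | z.2 ≤ z.1}.indicator (Function.uncurry g) (s, θ)) =
      (Ici θ).indicator (fun s => g s θ) := by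
    ext s
    by_cases h : θ ≤ s <;> simp [indicator, h]
  rw [hfiber, integral_indicator measurableSet_Ici, μab,
    Measure.restrict_restrict measurableSet_Ici,
    show Ici θ ∩ Icc a b = Icc θ b from ext fun x => by
      simp only [mem_inter_iff, mem_Ici, mem_Icc]
      exact ⟨fun h => ⟨h.1, h.2.2⟩, fun h => ⟨h.1, hθ.1.trans h.1, h.2⟩⟩,
    intervalIntegral.integral_of_le hθ.2, integral_Icc_eq_integral_Ioc]

variable (hg : Integrable (Function.uncurry g) ((μab a b).prod (μab a b)))
include hg

theorem integrable_intervalIntegral_triangle_fst :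
    Integrable (fun s => ∫ θ in a..s, g s θ) (μab a b) := by
  refine (Integrable.integral_prod_left (hg.indicator
    (measurableSet_le measurable_snd measurable_fst))).congr ?_
  filter_upwards [ae_mem_μab] with s hs
  exact (intervalIntegral_eq_integral_indicator_fst hs).symm

theorem integrable_intervalIntegral_triangle_snd :
    Integrable (fun θ => ∫ s in θ..b, g s θ) (μab a b) := by
  refine (Integrable.integral_prod_right (hg.indicator
    (measurableSet_le measurable_snd measurable_fst))).congr ?_
  filter_upwards [ae_mem_μab] with θ hθ
  exact (intervalIntegral_eq_integral_indicator_snd hθ).symm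

theorem intervalIntegral_triangle_swap (hab : a ≤ b) :
    ∫ s in a..b, ∫ θ in a..s, g s θ = ∫ θ in a..b, ∫ s in θ..b, g s θ := by
  set G := {z : ℝ × ℝ | z.2 ≤ z.1}.indicator (Function.uncurry g)
  have hG : Integrable G ((μab a b).prod (μab a b)) :=
    hg.indicator (measurableSet_le measurable_snd measurable_fst)
  rw [intervalIntegral_eq_integral_μab hab, intervalIntegral_eq_integral_μab hab]
  calc ∫ s, (∫ θ in a..s, g s θ) ∂μab a b = ∫ s, ∫ θ, G (s, θ) ∂μab a b ∂μab a b :=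
        integral_congr_ae <| ae_mem_μab.mono
          fun s hs => intervalIntegral_eq_integral_indicator_fst (g := g) hs
    _ = ∫ θ, ∫ s, G (s, θ) ∂μab a b ∂μab a b := integral_integral_swap hG
    _ = ∫ θ, (∫ s in θ..b, g s θ) ∂μab a b :=
        integral_congr_ae <| ae_mem_μab.mono
          fun θ hθ => (intervalIntegral_eq_integral_indicator_snd (g := g) hθ).symm

end Triangle

theorem intervalIntegral_intervalIntegral_eq_sub_mul {a s : ℝ} {f : ℝ → ℝ} (has : a ≤ s)
    (hf : Integrable f (μab a s)) :
    ∫ θ in a..s, ∫ β in a..θ, f β = ∫ β in a..s, (s - β) * f β := by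
  rw [intervalIntegral_triangle_swap (g := fun _ β => f β) (hf.comp_snd (μab a s)) has]
  simp

section MatrixIntegral

variable {m n l : Type*} [Fintype n]

theorem integrable_mulVec_apply {α : Type*} [MeasurableSpace α] {μ : Measure α}
    {M : α → Matrix m n ℝ} {v : α → n → ℝ} (hM : ∀ i j, MemLp (fun s => M s i j) 2 μ)
    (hv : ∀ j, MemLp (fun s => v s j) 2 μ) (i : m) :
    Integrable (fun s => (M s *ᵥ v s) i) μ :=
  integrable_finsetSum _ fun j _ => (hM i j).integrable_mul (hv j)

theorem integrable_const_mulVec_apply {α : Type*} [MeasurableSpace α] {μ : Measure α}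
    (A : Matrix m n ℝ) {v : α → n → ℝ} (hv : ∀ j, Integrable (fun s => v s j) μ) (i : m) :
    Integrable (fun s => (A *ᵥ v s) i) μ :=
  integrable_finsetSum _ fun j _ => (hv j).const_mul (A i j)

theorem mulVec_intervalIntegral (A : Matrix m n ℝ) {v : ℝ → n → ℝ} {c d : ℝ}
    (hv : ∀ j, IntervalIntegrable (fun s => v s j) volume c d) :
    A *ᵥ (fun j => ∫ s in c..d, v s j) = fun i => ∫ s in c..d, (A *ᵥ v s) i := by
  ext i
  simp only [mulVec, dotProduct, ← intervalIntegral.integral_const_mul]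
  exact (intervalIntegral.integral_finsetSum fun j _ => (hv j).const_mul (A i j)).symm

theorem of_intervalIntegral_mulVec {M : ℝ → Matrix m n ℝ} {c d : ℝ}
    (hM : ∀ i j, IntervalIntegrable (fun s => M s i j) volume c d) (w : n → ℝ) :
    (of fun i j => ∫ s in c..d, M s i j) *ᵥ w = fun i => ∫ s in c..d, (M s *ᵥ w) i := by
  ext i
  simp only [mulVec, dotProduct, of_apply, ← intervalIntegral.integral_mul_const]
  exact (intervalIntegral.integral_finsetSum fun j _ => (hM i j).mul_const (w j)).symm

theorem integrable_mulVec_apply_of_continuous {a b : ℝ} {M : ℝ → Matrix m n ℝ}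
    (hM : Continuous M) {v : ℝ → n → ℝ} (hv : MemLp v 2 (μab a b)) (i : m) :
    Integrable (fun s => (M s *ᵥ v s) i) (μab a b) :=
  integrable_mulVec_apply
    (fun i j => memLp_μab_of_continuousOn (hM.matrix_elem i j).continuousOn 2) hv.eval i

theorem integrable_mul_mulVec_prod [Fintype l] {a b : ℝ} {A : ℝ → Matrix m l ℝ}
    {P : ℝ → ℝ → Matrix l n ℝ} {v : ℝ → n → ℝ} (hA : ∀ i k, Integrable (fun s => A s i k) (μab a b))
    (hP : Continuous (Function.uncurry P)) (hv : ∀ j, Integrable (fun θ => v θ j) (μab a b))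
    (i : m) :
    Integrable (fun z : ℝ × ℝ => ((A z.1 * P z.1 z.2) *ᵥ v z.2) i)
      ((μab a b).prod (μab a b)) := by
  simp only [mulVec, dotProduct, mul_apply, Finset.sum_mul]
  exact integrable_finsetSum _ fun j _ => integrable_finsetSum _ fun k _ =>
    integrable_mul_prod_mul (p := fun s θ => P s θ k j) (hA i k) (hv j) (hP.matrix_elem k j)

theorem memLp_mul_apply {a b : ℝ} {M : ℝ → Matrix m n ℝ} {C : ℝ → Matrix n l ℝ}
    (hM : ∀ i k, MemLp (fun s => M s i k) 2 (μab a b)) (hC : Continuous C) (i : m) (j : l) :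
    MemLp (fun s => (M s * C s) i j) 2 (μab a b) := by
  simp only [mul_apply]
  exact memLp_finsetSum _ fun k _ =>
    (memLp_μab_of_continuousOn (hC.matrix_elem k j).continuousOn ⊤).mul' (r := 2) (hM i k)

end MatrixIntegral

section Blocks

variable {n0 n1 n2 : ℕ}

@[fun_prop]
theorem continuous_Tmat : Continuous (Tmat n1 n2) :=
  continuous_pi fun i => continuous_pi fun j => by
    rcases i with i | i | i <;> rcases j with j | j | j <;> simp only [Tmat, of_apply] <;>
      (try split_ifs) <;> fun_prop

@[fun_prop]
theorem continuous_Qmat : Continuous (Qmat n0 n1 n2) :=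
  continuous_pi fun i => continuous_pi fun j => by
    rcases i with i | i | i <;> rcases j with j | j | j <;> simp only [Qmat, of_apply] <;>
      (try split_ifs) <;> fun_prop

@[fun_prop]
theorem continuous_Qstack : Continuous (Qstack n0 n1 n2) :=
  continuous_pi fun i => continuous_pi fun j => by
    rcases i with i | i
    · exact continuous_const
    · exact continuous_Qmat.matrix_elem i j

@[simp] theorem Tmat_mulVec_inl (η : ℝ) (v : Ic n1 n2 → ℝ) (i : Fin n1) :
    (Tmat n1 n2 η *ᵥ v) (.inl i) = v (.inl i) := by
  simp [Tmat, mulVec, dotProduct, Fintype.sum_sum_type]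

@[simp] theorem Tmat_mulVec_inr_inl (η : ℝ) (v : Ic n1 n2 → ℝ) (i : Fin n2) :
    (Tmat n1 n2 η *ᵥ v) (.inr (.inl i)) = v (.inr (.inl i)) + η * v (.inr (.inr i)) := by
  simp [Tmat, mulVec, dotProduct, Fintype.sum_sum_type]

@[simp] theorem Tmat_mulVec_inr_inr (η : ℝ) (v : Ic n1 n2 → ℝ) (i : Fin n2) :
    (Tmat n1 n2 η *ᵥ v) (.inr (.inr i)) = v (.inr (.inr i)) := by
  simp [Tmat, mulVec, dotProduct, Fintype.sum_sum_type]

@[simp] theorem Qmat_mulVec_inl (η : ℝ) (v : Ix n0 n1 n2 → ℝ) (i : Fin n1) :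
    (Qmat n0 n1 n2 η *ᵥ v) (.inl i) = v (.inr (.inl i)) := by
  simp [Qmat, mulVec, dotProduct, Fintype.sum_sum_type]

@[simp] theorem Qmat_mulVec_inr_inl (η : ℝ) (v : Ix n0 n1 n2 → ℝ) (i : Fin n2) :
    (Qmat n0 n1 n2 η *ᵥ v) (.inr (.inl i)) = η * v (.inr (.inr i)) := by
  simp [Qmat, mulVec, dotProduct, Fintype.sum_sum_type]

@[simp] theorem Qmat_mulVec_inr_inr (η : ℝ) (v : Ix n0 n1 n2 → ℝ) (i : Fin n2) :
    (Qmat n0 n1 n2 η *ᵥ v) (.inr (.inr i)) = v (.inr (.inr i)) := by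
  simp [Qmat, mulVec, dotProduct, Fintype.sum_sum_type]

theorem Tstack_mulVec (a b : ℝ) (v : Ic n1 n2 → ℝ) :
    Tstack a b n1 n2 *ᵥ v = Sum.elim (Tmat n1 n2 0 *ᵥ v) (Tmat n1 n2 (b - a) *ᵥ v) := by
  ext (i | i) <;> rfl

theorem Qstack_mulVec (η : ℝ) (v : Ix n0 n1 n2 → ℝ) :
    Qstack n0 n1 n2 η *ᵥ v = Sum.elim (0 : Ic n1 n2 → ℝ) (Qmat n0 n1 n2 η *ᵥ v) := by
  ext (i | i)
  · simp [Qstack, mulVec, dotProduct]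
  · rfl

theorem U1_mulVec_add_U2_mulVec (u : Ix n0 n1 n2 → ℝ) (w : Ic n1 n2 → ℝ) :
    U1 n0 n1 n2 *ᵥ u + U2 n0 n1 n2 *ᵥ w = Sum.elim u w := by
  ext (i | i) <;> simp [U1, U2, mulVec, dotProduct]

end Blocks

section Kernels

variable {a b : ℝ} {n0 n1 n2 : ℕ} (B : Matrix (Ic n1 n2) (Ic n1 n2 ⊕ Ic n1 n2) ℝ)
  (B_I : ℝ → Matrix (Ic n1 n2) (ID n0 n1 n2) ℝ) (s θ : ℝ) (v : Ix n0 n1 n2 → ℝ)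

@[simp] theorem G0_mulVec_inl (i : Fin n0) : (G0 n0 n1 n2 *ᵥ v) (.inl i) = v (.inl i) := by
  simp [G0, mulVec, dotProduct, Fintype.sum_sum_type]

@[simp] theorem G0_mulVec_inr (k : I12 n1 n2) : (G0 n0 n1 n2 *ᵥ v) (.inr k) = 0 := by
  simp [G0, mulVec, dotProduct]

@[simp] theorem G2_mulVec_inl (i : Fin n0) : (G2 a b n0 n1 n2 B B_I s θ *ᵥ v) (.inl i) = 0 := by
  simp [G2, mulVec, dotProduct]

theorem G2_mulVec_inr (k : I12 n1 n2) :
    (G2 a b n0 n1 n2 B B_I s θ *ᵥ v) (.inr k) =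
      (Tmat n1 n2 (s - a) *ᵥ (BQ a b n0 n1 n2 B B_I θ *ᵥ v)) (emb12 n1 n2 k) := by
  rw [mulVec_mulVec]
  rfl

@[simp] theorem G1_mulVec_inl (i : Fin n0) : (G1 a b n0 n1 n2 B B_I s θ *ᵥ v) (.inl i) = 0 := by
  simp [G1, G2, mulVec, dotProduct]

theorem G1_mulVec_inr (k : I12 n1 n2) :
    (G1 a b n0 n1 n2 B B_I s θ *ᵥ v) (.inr k) =
      (Qmat n0 n1 n2 (s - θ) *ᵥ v) (emb12 n1 n2 k) + (G2 a b n0 n1 n2 B B_I s θ *ᵥ v) (.inr k) := by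
  rw [G1, add_mulVec]
  rfl

end Kernels

section OfDx

variable {a b : ℝ} {n0 n1 n2 : ℕ}

def State.ofDx (v : ℝ → Ix n0 n1 n2 → ℝ) (hv : MemLp v 2 (μab a b)) (c : Ic n1 n2 → ℝ) :
    State a b n0 n1 n2 where
  x0 s i := v s (.inl i)
  x1 s i := c (.inl i) + ∫ θ in a..s, v θ (.inr (.inl i))
  dx1 s i := v s (.inr (.inl i))
  x2 s i := c (.inr (.inl i)) + ∫ θ in a..s, (c (.inr (.inr i)) + ∫ β in a..θ, v β (.inr (.inr i)))
  dx2 s i := c (.inr (.inr i)) + ∫ θ in a..s, v θ (.inr (.inr i))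
  ddx2 s i := v s (.inr (.inr i))
  memLp_x0 := memLp_pi_iff.2 fun i => hv.eval (.inl i)
  memLp_dx1 := memLp_pi_iff.2 fun i => hv.eval (.inr (.inl i))
  memLp_dx2 := memLp_pi_iff.2 fun i => memLp_μab_of_continuousOn
    (continuousOn_const.add (continuousOn_primitive_μab
      ((hv.eval (.inr (.inr i))).integrable one_le_two))) 2
  memLp_ddx2 := memLp_pi_iff.2 fun i => hv.eval (.inr (.inr i))
  ftc_x1 _ _ _ := by simp
  ftc_x2 _ _ _ := by simp
  ftc_dx2 _ _ _ := by simp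

theorem xfun_inl (x : State a b n0 n1 n2) (s : ℝ) (i : Fin n0) :
    xfun x s (.inl i) = Dx x s (.inl i) := rfl

theorem xfun_inr (x : State a b n0 n1 n2) (s : ℝ) (k : I12 n1 n2) :
    xfun x s (.inr k) = xc x s (emb12 n1 n2 k) := by
  rcases k with k | k <;> rfl

variable {v : ℝ → Ix n0 n1 n2 → ℝ} (hv : MemLp v 2 (μab a b)) (c : Ic n1 n2 → ℝ)

theorem Dx_ofDx (s : ℝ) : Dx (State.ofDx v hv c) s = v s := by
  ext (i | i | i) <;> rfl

theorem xc_ofDx {s : ℝ} (hs : s ∈ Icc a b) :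
    xc (State.ofDx v hv c) s =
      Tmat n1 n2 (s - a) *ᵥ c + fun k => ∫ θ in a..s, (Qmat n0 n1 n2 (s - θ) *ᵥ v θ) k := by
  have hint : ∀ j, Integrable (fun θ => v θ j) (μab a b) := fun j =>
    (hv.eval j).integrable one_le_two
  ext (k | k | k)
  · simp [xc, State.ofDx]
  · have hprim := (continuousOn_primitive_μab (hint (.inr (.inr k)))).mono
      (uIcc_subset_Icc ⟨le_rfl, hs.1.trans hs.2⟩ hs)
    have hcauchy := intervalIntegral_intervalIntegral_eq_sub_mul hs.1
      ((hint (.inr (.inr k))).mono_measure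
        (Measure.restrict_mono (Icc_subset_Icc le_rfl hs.2) le_rfl))
    simp only [xc, State.ofDx, Sum.elim_inr, Sum.elim_inl, Pi.add_apply, Tmat_mulVec_inr_inl,
      Qmat_mulVec_inr_inl]
    rw [intervalIntegral.integral_add intervalIntegrable_const hprim.intervalIntegrable,
      hcauchy, intervalIntegral.integral_const, smul_eq_mul]
    ring
  · simp [xc, State.ofDx]

theorem xb_ofDx (hab : a ≤ b) :
    xb (State.ofDx v hv c) =
      Tstack a b n1 n2 *ᵥ c + fun K => ∫ θ in a..b, (Qstack n0 n1 n2 (b - θ) *ᵥ v θ) K := by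
  ext (k | k)
  · simp [xb, xc_ofDx hv c ⟨le_rfl, hab⟩, Tstack_mulVec, Qstack_mulVec]
  · simp [xb, xc_ofDx hv c ⟨hab, le_rfl⟩, Tstack_mulVec, Qstack_mulVec]

theorem mulVec_xb_ofDx (B : Matrix (Ic n1 n2) (Ic n1 n2 ⊕ Ic n1 n2) ℝ) (hab : a ≤ b) :
    B *ᵥ xb (State.ofDx v hv c) = (B * Tstack a b n1 n2) *ᵥ c +
      fun i => ∫ θ in a..b, ((B * Qstack n0 n1 n2 (b - θ)) *ᵥ v θ) i := by
  rw [xb_ofDx hv c hab, mulVec_add, mulVec_mulVec, mulVec_intervalIntegral _ fun K =>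
    intervalIntegrable_of_integrable_μab (integrable_mulVec_apply_of_continuous
      (M := fun θ => Qstack n0 n1 n2 (b - θ)) (by fun_prop) hv K) ⟨le_rfl, hab⟩ ⟨hab, le_rfl⟩]
  simp only [mulVec_mulVec]

theorem mulVec_xD_ofDx (N : Matrix (Ic n1 n2) (ID n0 n1 n2) ℝ) {s : ℝ} (hs : s ∈ Icc a b)
    (i : Ic n1 n2) :
    (N *ᵥ xD (State.ofDx v hv c) s) i =
      ((N * U1 n0 n1 n2) *ᵥ v s) i + ((N * U2 n0 n1 n2 * Tmat n1 n2 (s - a)) *ᵥ c) i +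
        ∫ θ in a..s, ((N * U2 n0 n1 n2 * Qmat n0 n1 n2 (s - θ)) *ᵥ v θ) i := by
  rw [xD, ← U1_mulVec_add_U2_mulVec, Dx_ofDx, xc_ofDx hv c hs]
  simp only [mulVec_add, mulVec_mulVec]
  rw [mulVec_intervalIntegral _ fun k => intervalIntegrable_of_integrable_μab
    (integrable_mulVec_apply_of_continuous (M := fun θ => Qmat n0 n1 n2 (s - θ)) (by fun_prop)
      hv k) ⟨le_rfl, hs.1.trans hs.2⟩ hs]
  simp only [mulVec_mulVec, Pi.add_apply, add_assoc, Matrix.mul_assoc]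

end OfDx

theorem integrable_B_mul_Qstack_mulVec {a b : ℝ} {n0 n1 n2 : ℕ}
    (B : Matrix (Ic n1 n2) (Ic n1 n2 ⊕ Ic n1 n2) ℝ) {v : ℝ → Ix n0 n1 n2 → ℝ}
    (hv : MemLp v 2 (μab a b)) (i : Ic n1 n2) :
    Integrable (fun θ => ((B * Qstack n0 n1 n2 (b - θ)) *ᵥ v θ) i) (μab a b) :=
  integrable_mulVec_apply_of_continuous (M := fun θ => B * Qstack n0 n1 n2 (b - θ))
    (by fun_prop) hv i

section BoundaryCondition

variable {a b : ℝ} {n0 n1 n2 : ℕ} (B : Matrix (Ic n1 n2) (Ic n1 n2 ⊕ Ic n1 n2) ℝ)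
  (B_I : ℝ → Matrix (Ic n1 n2) (ID n0 n1 n2) ℝ)

def BQbracket (b θ : ℝ) : Matrix (Ic n1 n2) (Ix n0 n1 n2) ℝ :=
  B_I θ * U1 n0 n1 n2 - B * Qstack n0 n1 n2 (b - θ) +
    of fun i j => ∫ β in θ..b, (B_I β * U2 n0 n1 n2 * Qmat n0 n1 n2 (β - θ)) i j

theorem BT_mul_BQ (hadm : Admissible a b n0 n1 n2 B B_I) (θ : ℝ) :
    BT a b n0 n1 n2 B B_I * BQ a b n0 n1 n2 B B_I θ = BQbracket B B_I b θ := by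
  rw [BQ, ← Matrix.mul_assoc, mul_nonsing_inv _ hadm, Matrix.one_mul, BQbracket]

variable {B_I} (hBI : SqIntMat a b B_I)
include hBI

theorem memLp_B_I_mul_apply {κ : Type*} (U : Matrix (ID n0 n1 n2) κ ℝ) (i : Ic n1 n2) (j : κ) :
    MemLp (fun s => (B_I s * U) i j) 2 (μab a b) :=
  memLp_mul_apply hBI.2 continuous_const i j

theorem memLp_B_I_mul_U2_mul_apply {κ : Type*} [Fintype κ] {C : ℝ → Matrix (Ic n1 n2) κ ℝ}
    (hC : Continuous C) (i : Ic n1 n2) (j : κ) :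
    MemLp (fun s => (B_I s * U2 n0 n1 n2 * C s) i j) 2 (μab a b) :=
  memLp_mul_apply (memLp_B_I_mul_apply hBI _) hC i j

theorem BQbracket_mulVec_apply {v : Ix n0 n1 n2 → ℝ} {θ : ℝ} (hθ : θ ∈ Icc a b)
    (i : Ic n1 n2) :
    (BQbracket B B_I b θ *ᵥ v) i =
      ((B_I θ * U1 n0 n1 n2) *ᵥ v) i - ((B * Qstack n0 n1 n2 (b - θ)) *ᵥ v) i +
        ∫ s in θ..b, ((B_I s * U2 n0 n1 n2 * Qmat n0 n1 n2 (s - θ)) *ᵥ v) i := by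
  have hent : ∀ i j, IntervalIntegrable
      (fun s => (B_I s * U2 n0 n1 n2 * Qmat n0 n1 n2 (s - θ)) i j) volume θ b := fun i j =>
    intervalIntegrable_of_integrable_μab
      ((memLp_B_I_mul_U2_mul_apply hBI (by fun_prop) i j).integrable one_le_two)
      hθ ⟨hθ.1.trans hθ.2, le_rfl⟩
  simp only [BQbracket, add_mulVec, sub_mulVec, Pi.add_apply, Pi.sub_apply,
    of_intervalIntegral_mulVec hent]

variable {v : ℝ → Ix n0 n1 n2 → ℝ} (hv : MemLp v 2 (μab a b))
include hv

theorem integrable_B_I_mul_U1_mulVec (i : Ic n1 n2) :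
    Integrable (fun θ => ((B_I θ * U1 n0 n1 n2) *ᵥ v θ) i) (μab a b) :=
  integrable_mulVec_apply (memLp_B_I_mul_apply hBI _) hv.eval i

theorem integrable_B_I_mul_Qmat_mulVec_prod (i : Ic n1 n2) :
    Integrable (Function.uncurry fun s θ =>
      ((B_I s * U2 n0 n1 n2 * Qmat n0 n1 n2 (s - θ)) *ᵥ v θ) i) ((μab a b).prod (μab a b)) :=
  integrable_mul_mulVec_prod (A := fun s => B_I s * U2 n0 n1 n2)
    (P := fun s θ => Qmat n0 n1 n2 (s - θ))
    (fun i k => (memLp_B_I_mul_apply hBI _ i k).integrable one_le_two) (by fun_prop)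
    (fun j => (hv.eval j).integrable one_le_two) i

theorem integrable_BQbracket_mulVec (i : Ic n1 n2) :
    Integrable (fun θ => (BQbracket B B_I b θ *ᵥ v θ) i) (μab a b) :=
  (((integrable_B_I_mul_U1_mulVec hBI hv i).sub (integrable_B_mul_Qstack_mulVec B hv i)).add
    (integrable_intervalIntegral_triangle_snd
      (integrable_B_I_mul_Qmat_mulVec_prod hBI hv i))).congr
    (ae_mem_μab.mono fun _ hθ => (BQbracket_mulVec_apply B hBI hθ i).symm)

theorem integral_BQbracket_mulVec (hab : a ≤ b) (i : Ic n1 n2) :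
    ∫ θ in a..b, (BQbracket B B_I b θ *ᵥ v θ) i =
      (∫ θ in a..b, ((B_I θ * U1 n0 n1 n2) *ᵥ v θ) i) -
        (∫ θ in a..b, ((B * Qstack n0 n1 n2 (b - θ)) *ᵥ v θ) i) +
        ∫ θ in a..b, ∫ s in θ..b, ((B_I s * U2 n0 n1 n2 * Qmat n0 n1 n2 (s - θ)) *ᵥ v θ) i := by
  have hU1 := integrable_B_I_mul_U1_mulVec hBI hv i
  have hQstack := integrable_B_mul_Qstack_mulVec B hv i
  simp only [intervalIntegral_eq_integral_μab hab]
  rw [integral_congr_ae (ae_mem_μab.mono fun _ hθ => BQbracket_mulVec_apply B hBI hθ i),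
    integral_add ?_ (integrable_intervalIntegral_triangle_snd
      (integrable_B_I_mul_Qmat_mulVec_prod hBI hv i)), integral_sub hU1 hQstack]
  exact hU1.sub hQstack

theorem integrable_BQ_mulVec (k : Ic n1 n2) :
    Integrable (fun θ => (BQ a b n0 n1 n2 B B_I θ *ᵥ v θ) k) (μab a b) := by
  simp only [BQ, ← mulVec_mulVec]
  exact integrable_const_mulVec_apply _ (integrable_BQbracket_mulVec B hBI hv) k

theorem BT_mulVec_integral_BQ_mulVec (hab : a ≤ b) (hadm : Admissible a b n0 n1 n2 B B_I) :
    BT a b n0 n1 n2 B B_I *ᵥ (fun k => ∫ θ in a..b, (BQ a b n0 n1 n2 B B_I θ *ᵥ v θ) k) =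
      fun i => ∫ θ in a..b, (BQbracket B B_I b θ *ᵥ v θ) i := by
  rw [mulVec_intervalIntegral _ fun k => intervalIntegrable_of_integrable_μab
    (integrable_BQ_mulVec B hBI hv k) ⟨le_rfl, hab⟩ ⟨hab, le_rfl⟩]
  simp_rw [mulVec_mulVec, BT_mul_BQ B B_I hadm]

theorem integral_B_I_mulVec_xD_ofDx (hab : a ≤ b) (c : Ic n1 n2 → ℝ) (i : Ic n1 n2) :
    ∫ s in a..b, (B_I s *ᵥ xD (State.ofDx v hv c) s) i =
      (∫ s in a..b, ((B_I s * U1 n0 n1 n2) *ᵥ v s) i) +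
        (∫ s in a..b, ((B_I s * U2 n0 n1 n2 * Tmat n1 n2 (s - a)) *ᵥ c) i) +
        ∫ s in a..b, ∫ θ in a..s, ((B_I s * U2 n0 n1 n2 * Qmat n0 n1 n2 (s - θ)) *ᵥ v θ) i := by
  have hU1 := integrable_B_I_mul_U1_mulVec hBI hv i
  have hT : Integrable (fun s => ((B_I s * U2 n0 n1 n2 * Tmat n1 n2 (s - a)) *ᵥ c) i)
      (μab a b) :=
    integrable_mulVec_apply (memLp_B_I_mul_U2_mul_apply hBI (by fun_prop))
      (fun j => memLp_const (c j)) i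
  have hVolterra := integrable_intervalIntegral_triangle_fst
    (integrable_B_I_mul_Qmat_mulVec_prod hBI hv i)
  simp only [intervalIntegral_eq_integral_μab hab]
  rw [integral_congr_ae (ae_mem_μab.mono fun s hs => mulVec_xD_ofDx hv c (B_I s) hs i),
    integral_add ?_ hVolterra, integral_add hU1 hT]
  exact hU1.add hT

end BoundaryCondition

section Tstate

variable {a b : ℝ} {n0 n1 n2 : ℕ} (B : Matrix (Ic n1 n2) (Ic n1 n2 ⊕ Ic n1 n2) ℝ)
  (B_I : ℝ → Matrix (Ic n1 n2) (ID n0 n1 n2) ℝ)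

def Tstate {v : ℝ → Ix n0 n1 n2 → ℝ} (hv : MemLp v 2 (μab a b)) : State a b n0 n1 n2 :=
  State.ofDx v hv fun k => ∫ θ in a..b, (BQ a b n0 n1 n2 B B_I θ *ᵥ v θ) k

variable {B_I} (hBI : SqIntMat a b B_I) {v : ℝ → Ix n0 n1 n2 → ℝ} (hv : MemLp v 2 (μab a b))
include hBI hv

theorem BCholds_Tstate (hab : a ≤ b) (hadm : Admissible a b n0 n1 n2 B B_I) :
    BCholds a b n0 n1 n2 B B_I (Tstate B B_I hv) := by
  intro i
  have hK : ∀ l j, IntervalIntegrable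
      (fun s => (B_I s * U2 n0 n1 n2 * Tmat n1 n2 (s - a)) l j) volume a b := fun l j =>
    intervalIntegrable_of_integrable_μab
      ((memLp_B_I_mul_U2_mul_apply hBI (by fun_prop) l j).integrable one_le_two)
      ⟨le_rfl, hab⟩ ⟨hab, le_rfl⟩
  have hBTstack : B * Tstack a b n1 n2 = BT a b n0 n1 n2 B B_I +
      of fun l j => ∫ s in a..b, (B_I s * U2 n0 n1 n2 * Tmat n1 n2 (s - a)) l j :=
    (sub_add_cancel _ _).symm
  rw [Tstate, integral_B_I_mulVec_xD_ofDx hBI hv hab, mulVec_xb_ofDx hv _ B hab, hBTstack,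
    add_mulVec, BT_mulVec_integral_BQ_mulVec B hBI hv hab hadm, of_intervalIntegral_mulVec hK]
  simp only [Pi.add_apply]
  rw [integral_BQbracket_mulVec B hBI hv hab i, ← intervalIntegral_triangle_swap
    (integrable_B_I_mul_Qmat_mulVec_prod hBI hv i) hab]
  ring

theorem Tfun_eq_xfun_Tstate {s : ℝ} (hs : s ∈ Icc a b) :
    Tfun a b n0 n1 n2 B B_I v s = xfun (Tstate B B_I hv) s := by
  ext (i | k)
  · simp [Tfun, xfun_inl, Tstate, Dx_ofDx]
  have ha : a ∈ Icc a b := ⟨le_rfl, hs.1.trans hs.2⟩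
  have hb : b ∈ Icc a b := ⟨hs.1.trans hs.2, le_rfl⟩
  have hBQ := integrable_BQ_mulVec B hBI hv
  have hT : ∀ {c d}, c ∈ Icc a b → d ∈ Icc a b → IntervalIntegrable
      (fun θ => (Tmat n1 n2 (s - a) *ᵥ (BQ a b n0 n1 n2 B B_I θ *ᵥ v θ)) (emb12 n1 n2 k))
      volume c d := fun hc hd =>
    intervalIntegrable_of_integrable_μab (integrable_const_mulVec_apply _ hBQ _) hc hd
  have hQ : IntervalIntegrable (fun θ => (Qmat n0 n1 n2 (s - θ) *ᵥ v θ) (emb12 n1 n2 k))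
      volume a s :=
    intervalIntegrable_of_integrable_μab (integrable_mulVec_apply_of_continuous
      (M := fun θ => Qmat n0 n1 n2 (s - θ)) (by fun_prop) hv _) ha hs
  rw [xfun_inr, Tstate, xc_ofDx hv _ hs, mulVec_intervalIntegral _ fun k =>
    intervalIntegrable_of_integrable_μab (hBQ k) ha hb]
  simp only [Tfun, G0_mulVec_inr, G1_mulVec_inr, G2_mulVec_inr, zero_add]
  rw [intervalIntegral.integral_add hQ (hT ha hs), add_assoc,
    intervalIntegral.integral_add_adjacent_intervals (hT ha hs) (hT hs hb)]
  simp only [Pi.add_apply, add_comm]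

end Tstate

theorem T_map_b_general (a b : ℝ) (hab : a < b) (n0 n1 n2 : ℕ)
    (B : Matrix (Ic n1 n2) (Ic n1 n2 ⊕ Ic n1 n2) ℝ)
    (B_I : ℝ → Matrix (Ic n1 n2) (ID n0 n1 n2) ℝ)
    (hBI : SqIntMat a b B_I)
    (hadm : Admissible a b n0 n1 n2 B B_I)
    (xhat : ℝ → Ix n0 n1 n2 → ℝ)
    (hL2 : MemLp xhat 2 (μab a b)) :
    ∃ y : State a b n0 n1 n2, BCholds a b n0 n1 n2 B B_I y ∧
      (∀ᵐ s ∂(μab a b), ∀ i, xfun y s i = Tfun a b n0 n1 n2 B B_I xhat s i) ∧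
      (∀ᵐ s ∂(μab a b), ∀ i, Dx y s i = xhat s i) := by
  refine ⟨Tstate B B_I hL2, BCholds_Tstate B hBI hL2 hab.le hadm, ?_, ?_⟩
  · filter_upwards [ae_mem_μab] with s hs i
    rw [Tfun_eq_xfun_Tstate B hBI hL2 hs]
  · exact Eventually.of_forall fun s i => by rw [Tstate, Dx_ofDx]

/-- Theorem `T_map`, part (b). If `{(n0,n1,n2), B, B_I}` is admissible,
then for every `x̂ ∈ L2^{n_x}` the function `𝒯x̂` belongs to `X` (its components have the
required Sobolev regularity and satisfy the boundary condition), and `D(𝒯x̂) = x̂`. -/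
theorem T_map_b (a b : ℝ) (hab : a < b) (n0 n1 n2 : ℕ)
    (B : Matrix (Ic n1 n2) (Ic n1 n2 ⊕ Ic n1 n2) ℝ)
    (B_I : ℝ → Matrix (Ic n1 n2) (ID n0 n1 n2) ℝ)
    (hBI : SqIntMat a b B_I)
    (hadm : Admissible a b n0 n1 n2 B B_I)
    (xhat : ℝ → Ix n0 n1 n2 → ℝ) (hmeas : Measurable xhat)
    (hL2 : MemLp xhat 2 (μab a b)) :
    ∃ y : State a b n0 n1 n2, BCholds a b n0 n1 n2 B B_I y ∧
      (∀ᵐ s ∂(μab a b), ∀ i, xfun y s i = Tfun a b n0 n1 n2 B B_I xhat s i) ∧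
      (∀ᵐ s ∂(μab a b), ∀ i, Dx y s i = xhat s i) :=
  T_map_b_general a b hab n0 n1 n2 B B_I hBI hadm xhat hL2

end PIEpaper
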